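/- Every binary word of length at least some bound $N$ contains a circular $4$-power; consequently there is no infinite binary word avoiding circular $4$-powers, i.e., $\rtc(2) \geq 4$. -/

import Mathlib

/-!
Every binary word of length 4 contains a square `z z` with `z ∈ {0, 1, 01, 10}`. Cutting a
word of length 20 into five blocks of length 4, two of the blocks contain the same square
`z z`, so the word has a factor `z z t z z`; taking `x₁ = x₂ = z z` exhibits the circular
4-power `x₂ x₁ = z⁴`.
-/

/-- `u` occurs as a factor of the infinite word `w` (at some position `i`). -/
def FactorOf {α : Type*} (u : List α) (w : ℕ → α) : Prop :=
  ∃ i : ℕ, u = (List.range u.length).map (fun k => w (i + k))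

theorem List.exists_append_append_infix_of_forall_infix {α : Type*} (n : ℕ)
    (S : Finset (List α)) (v : List α) (hv : n * (S.card + 1) ≤ v.length)
    (hS : ∀ w, w <:+: v → w.length = n → ∃ u ∈ S, u <:+: w) :
    ∃ u ∈ S, ∃ t, u ++ t ++ u <:+: v := by
  classical
  induction S using Finset.strongInduction generalizing v with
  | H S ih =>
  obtain ⟨u, huS, hu_take⟩ := hS (v.take n) (v.take_prefix n).isInfix
    (List.length_take_of_le (by nlinarith))
  by_cases hu_drop : u <:+: v.drop n
  · obtain ⟨p, s, hp⟩ := hu_take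
    obtain ⟨p', s', hp'⟩ := hu_drop
    refine ⟨u, huS, s ++ p', p, s', ?_⟩
    rw [← v.take_append_drop n, ← hp, ← hp']
    simp only [List.append_assoc]
  -- `u` does not occur in `v.drop n`, so the blocks of `v.drop n` are covered by `S.erase u`.
  · have hcard : (S.erase u).card + 1 = S.card := Finset.card_erase_add_one huS
    have hdrop : v.drop n <:+: v := (v.drop_suffix n).isInfix
    obtain ⟨u', hu', t, ht⟩ := ih (S.erase u) (Finset.erase_ssubset huS) (v.drop n)
      (by rw [List.length_drop, hcard]; rw [Nat.mul_add_one] at hv; omega)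
      (fun w hw hwn => by
        obtain ⟨u', hu'S, hu'w⟩ := hS w (hw.trans hdrop) hwn
        exact ⟨u', Finset.mem_erase.2 ⟨fun h => hu_drop (h ▸ hu'w.trans hw), hu'S⟩, hu'w⟩)
    exact ⟨u', Finset.mem_of_mem_erase hu', t, ht.trans hdrop⟩

theorem FactorOf.of_infix_map_range {α : Type*} {u : List α} {n : ℕ} {w : ℕ → α}
    (h : u <:+: (List.range n).map w) : FactorOf u w := by
  obtain ⟨s, r, hs⟩ := h
  have hlen : s.length + u.length ≤ n := by
    simpa using (congrArg List.length hs).le.trans' (by simp)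
  refine ⟨s.length, List.ext_getElem (by simp) fun k hk _ => ?_⟩
  have := congrArg (·[s.length + k]?) hs
  simpa [List.getElem?_append_right, List.getElem?_append_left, hk,
    List.getElem?_range (show s.length + k < n by omega), eq_comm] using this

def binarySquares : Finset (List (Fin 2)) :=
  ({[0], [1], [0, 1], [1, 0]} : Finset (List (Fin 2))).image fun z => z ++ z

theorem exists_binarySquares_infix_of_length_eq_four (w : List (Fin 2)) (hw : w.length = 4) :
    ∃ u ∈ binarySquares, u <:+: w := by
  match w, hw with
  | [a, b, c, d], _ => revert a b c d; decide

theorem exists_circular_fourth_power_of_length_ge_twenty (v : List (Fin 2)) (hv : 20 ≤ v.length) :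
    ∃ x₁ t x₂ z : List (Fin 2), z ≠ [] ∧ (x₁ ++ t ++ x₂) <:+: v ∧
      x₂ ++ x₁ = z ++ z ++ z ++ z := by
  obtain ⟨u, hu, t, ht⟩ := List.exists_append_append_infix_of_forall_infix 4 binarySquares v
    (by rwa [show binarySquares.card = 4 by decide])
    (fun w _ hw => exists_binarySquares_infix_of_length_eq_four w hw)
  obtain ⟨z, hz, rfl⟩ := Finset.mem_image.1 hu
  refine ⟨z ++ z, t, z ++ z, z, ?_, ht, by simp only [List.append_assoc]⟩
  rintro rfl
  simp at hz

theorem circular_fourth_powers_unavoidable_binary :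
    (∃ N : ℕ, ∀ v : List (Fin 2), N ≤ v.length →
      ∃ x₁ t x₂ z : List (Fin 2), z ≠ [] ∧ (x₁ ++ t ++ x₂) <:+: v ∧
        x₂ ++ x₁ = z ++ z ++ z ++ z) ∧
    (∀ w : ℕ → Fin 2, ∃ x₁ t x₂ z : List (Fin 2), z ≠ [] ∧
      FactorOf (x₁ ++ t ++ x₂) w ∧ x₂ ++ x₁ = z ++ z ++ z ++ z) := by
  refine ⟨⟨20, exists_circular_fourth_power_of_length_ge_twenty⟩, fun w => ?_⟩
  obtain ⟨x₁, t, x₂, z, hz, hinfix, hpow⟩ :=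
    exists_circular_fourth_power_of_length_ge_twenty ((List.range 20).map w) (by simp)
  exact ⟨x₁, t, x₂, z, hz, FactorOf.of_infix_map_range hinfix, hpow⟩
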